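/- Let x and y be distinct words of length n over {0,…,q−1} such that there exist D, E ⊆ {1,…,n} with |D| = |E| ≤ d and x^{(D)} = y^{(E)}. Then M(x) ≠ M(y), i.e., Δ(x,y) ≠ 0. -/

import Mathlib

/-!
Compare the words from the right. Equal last letters carry equal weights and cancel, so drop
them and recurse. Otherwise write `u = u'a`, `v = v'b` with `b < a` in position `m + 1`, and
let `z` be a common subword of `u'` and `v'` of length `m - t`, `t ≤ d`. As the weights
increase and the letters are at most `p`, with `S = w_{m-t+1} + ⋯ + w_m` we get
`M(v') ≤ M(z) + p·S ≤ M(u') + p·S`, and the recursion for the weights makes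
`p·S < w_{m+1} ≤ (a - b)·w_{m+1}`. Hence `M(v) < M(u)`.
-/

/-- Weight sequence: `W p d i` = w_i(q,d) where p = q-1; w_i = 0 for i ≤ 0 (encoded by
ℕ truncated subtraction together with `W p d 0 = 0`), and w_i = 1 + p·∑_{j=1}^d w_{i-j}
for i ≥ 1. -/
def W (p d : ℕ) : ℕ → ℕ
  | 0 => 0
  | (i+1) => 1 + p * ∑ j ∈ Finset.range d, W p d (i - j)
decreasing_by exact Nat.lt_succ_of_le (Nat.sub_le i j)

/-- Moment of a word (1-indexed): M(x) = ∑_{i=1}^{n} w_i x_i. -/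
def moment (w : ℕ → ℕ) (x : List ℕ) : ℕ :=
  ∑ i ∈ Finset.range x.length, w (i + 1) * x.getD i 0

/-- Deleted word x^{(D)}: delete the symbols at the (1-indexed) positions in D,
keeping the remaining symbols in order. -/
def deleteD (x : List ℕ) (D : Finset ℕ) : List ℕ :=
  ((List.range x.length).filter (fun i => (i + 1) ∉ D)).map (fun i => x.getD i 0)

open Finset

lemma sum_range_sub_eq_sum_Ioc {M : Type*} [AddCommMonoid M] {f : ℕ → M} (hf : f 0 = 0)
    (m d : ℕ) : ∑ j ∈ range d, f (m - j) = ∑ i ∈ Ioc (m - d) m, f i := by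
  induction d with
  | zero => simp
  | succ d ih =>
    rw [sum_range_succ, ih]
    rcases lt_or_ge d m with hdm | hmd
    · obtain ⟨k, hk⟩ : ∃ k, m - d = k + 1 := ⟨m - (d + 1), by omega⟩
      rw [hk, show m - (d + 1) = k by omega, ← sum_Ioc_consecutive f k.le_succ (by omega),
        Nat.Ioc_succ_singleton, sum_singleton, add_comm]
    · rw [show m - d = 0 by omega, show m - (d + 1) = 0 by omega, hf, add_zero]

section Weights

variable (p d : ℕ)

lemma W_zero : W p d 0 = 0 := by rw [W]

lemma W_succ (m : ℕ) : W p d (m + 1) = 1 + p * ∑ i ∈ Ioc (m - d) m, W p d i := by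
  rw [W, sum_range_sub_eq_sum_Ioc (W_zero p d)]

lemma W_le_W_succ (i : ℕ) : W p d i ≤ W p d (i + 1) := by
  induction i using Nat.strong_induction_on with
  | _ i ih =>
    rcases i with _ | k
    · rw [W_zero]; exact Nat.zero_le _
    · rw [W, W]
      gcongr with j
      rcases le_or_gt j k with hjk | hjk
      · rw [show k + 1 - j = k - j + 1 by omega]
        exact ih _ (by omega)
      · rw [show k - j = 0 by omega, W_zero]
        exact Nat.zero_le _

lemma W_mono : Monotone (W p d) := monotone_nat_of_le_succ (W_le_W_succ p d)

lemma mul_sum_Ioc_W_lt {t : ℕ} (ht : t ≤ d) (m : ℕ) :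
    p * ∑ i ∈ Ioc (m - t) m, W p d i < W p d (m + 1) := by
  have hsub : Ioc (m - t) m ⊆ Ioc (m - d) m := Ioc_subset_Ioc_left (by omega)
  have := Nat.mul_le_mul_left p (sum_le_sum_of_subset (f := W p d) hsub)
  rw [W_succ]
  omega

end Weights

lemma List.sublist_concat_cases {α : Type*} {z l : List α} {a : α} (h : z.Sublist (l ++ [a])) :
    z.Sublist l ∨ ∃ z', z = z' ++ [a] ∧ z'.Sublist l := by
  obtain ⟨z₁, z₂, rfl, h₁, h₂⟩ := List.sublist_append_iff.mp h
  rcases List.sublist_singleton.mp h₂ with rfl | rfl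
  · left; simpa using h₁
  · right; exact ⟨z₁, rfl, h₁⟩

lemma List.dropLast_sublist_of_sublist_concat {α : Type*} {z l : List α} {a : α}
    (h : z.Sublist (l ++ [a])) : z.dropLast.Sublist l := by
  rcases List.sublist_concat_cases h with h' | ⟨z', rfl, h'⟩
  · exact (List.dropLast_sublist z).trans h'
  · rwa [List.dropLast_concat]

lemma moment_concat (w : ℕ → ℕ) (l : List ℕ) (a : ℕ) :
    moment w (l ++ [a]) = moment w l + w (l.length + 1) * a := by
  unfold moment
  rw [List.length_append, List.length_singleton, sum_range_succ, List.getD_eq_getElem?_getD,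
    List.getElem?_concat_length, Option.getD_some]
  congr 1
  exact sum_congr rfl fun i hi => by rw [List.getD_append _ _ _ _ (mem_range.mp hi)]

section Moment

variable {w : ℕ → ℕ}

lemma moment_le_moment_of_sublist (hw : Monotone w) {z v : List ℕ} (h : z.Sublist v) :
    moment w z ≤ moment w v := by
  induction v using List.reverseRecOn generalizing z with
  | nil => rw [List.sublist_nil.mp h]
  | append_singleton v b ih =>
    rw [moment_concat]
    rcases List.sublist_concat_cases h with h' | ⟨z', rfl, h'⟩
    · exact (ih h').trans (Nat.le_add_right _ _)
    · rw [moment_concat]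
      gcongr
      · exact ih h'
      · exact hw (by simpa using h'.length_le)

/-- The last letter of `u` is either deleted, costing at most `p·w_{|u|}`, or matched with the
last letter `a` of `z`, costing `(w_{|u|} - w_{|z|})·a ≤ p·(w_{|u|} - w_{|z|})`; the sum
telescopes. -/
lemma moment_le_moment_of_sublist_add (hw : Monotone w) {p : ℕ} {z u : List ℕ}
    (h : z.Sublist u) (hu : ∀ a ∈ u, a ≤ p) :
    moment w u ≤ moment w z + p * ∑ i ∈ Ioc z.length u.length, w i := by
  induction u using List.reverseRecOn generalizing z with
  | nil => simp [List.sublist_nil.mp h]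
  | append_singleton u a ih =>
    have hu' : ∀ b ∈ u, b ≤ p := fun b hb => hu b (List.mem_append_left _ hb)
    have hap : a ≤ p := hu a (by simp)
    rw [moment_concat, List.length_append, List.length_singleton]
    rcases List.sublist_concat_cases h with h' | ⟨z', rfl, h'⟩
    · have := ih h' hu'
      have := Nat.mul_le_mul_left (w (u.length + 1)) hap
      rw [sum_Ioc_succ_top h'.length_le, mul_add]
      linarith
    · have hz := h'.length_le
      have := ih h' hu'
      have hsplit : ∑ i ∈ Ioc z'.length u.length, w i + w (u.length + 1)
          = w (z'.length + 1) + ∑ i ∈ Ioc (z'.length + 1) (u.length + 1), w i := by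
        rw [← sum_Ioc_succ_top hz, ← sum_Ioc_consecutive w z'.length.le_succ (by omega),
          Nat.Ioc_succ_singleton, sum_singleton]
      have hmono : w (z'.length + 1) ≤ w (u.length + 1) := hw (by omega)
      rw [moment_concat, List.length_append, List.length_singleton]
      nlinarith [Nat.mul_le_mul_right (w (u.length + 1) - w (z'.length + 1)) hap,
        Nat.sub_add_cancel hmono]

end Moment

section Distinct

variable {p d : ℕ}

lemma moment_concat_lt_moment_concat {z u v : List ℕ} {a b : ℕ} (hzu : z.Sublist u)
    (hzv : z.Sublist v) (hlen : u.length = v.length) (hvz : v.length ≤ z.length + d)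
    (hv : ∀ c ∈ v, c ≤ p) (hba : b < a) :
    moment (W p d) (v ++ [b]) < moment (W p d) (u ++ [a]) := by
  have hv_le := moment_le_moment_of_sublist_add (W_mono p d) hzv hv
  have hzu_le := moment_le_moment_of_sublist (W_mono p d) hzu
  have hgap := mul_sum_Ioc_W_lt p d (t := v.length - z.length) (by omega) v.length
  rw [Nat.sub_sub_self hzv.length_le] at hgap
  have hlast := Nat.mul_le_mul_left (W p d (v.length + 1)) hba
  rw [moment_concat, moment_concat, hlen, Nat.mul_succ] at *
  omega

theorem moment_W_ne_of_common_sublist {z u v : List ℕ} (hlen : u.length = v.length)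
    (hzu : z.Sublist u) (hzv : z.Sublist v) (huz : u.length ≤ z.length + d)
    (hu : ∀ c ∈ u, c ≤ p) (hv : ∀ c ∈ v, c ≤ p) (hne : u ≠ v) :
    moment (W p d) u ≠ moment (W p d) v := by
  induction u using List.reverseRecOn generalizing v z with
  | nil => exact absurd (List.length_eq_zero_iff.mp hlen.symm).symm hne
  | append_singleton u a ih =>
    obtain ⟨v, b, rfl⟩ : ∃ v' b, v = v' ++ [b] := by
      rcases List.eq_nil_or_concat' v with rfl | h
      · simp at hlen
      · exact h
    simp only [List.length_append, List.length_singleton, Nat.add_right_cancel_iff] at hlen huz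
    have hzu' := List.dropLast_sublist_of_sublist_concat hzu
    have hzv' := List.dropLast_sublist_of_sublist_concat hzv
    have huz' : u.length ≤ z.dropLast.length + d := by rw [List.length_dropLast]; omega
    have hu' : ∀ c ∈ u, c ≤ p := fun c hc => hu c (List.mem_append_left _ hc)
    have hv' : ∀ c ∈ v, c ≤ p := fun c hc => hv c (List.mem_append_left _ hc)
    rcases lt_trichotomy a b with hab | rfl | hba
    · exact (moment_concat_lt_moment_concat hzv' hzu' hlen.symm (hlen ▸ huz') hu' hab).ne
    · have huv : u ≠ v := fun h => hne (h ▸ rfl)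
      rw [moment_concat, moment_concat, hlen]
      exact fun h => ih hlen hzu' hzv' huz' hu' hv' huv (Nat.add_right_cancel h)
    · exact (moment_concat_lt_moment_concat hzu' hzv' hlen (hlen ▸ huz') hv' hba).ne'

end Distinct

lemma deleteD_sublist (x : List ℕ) (D : Finset ℕ) : (deleteD x D).Sublist x := by
  have hx : (List.range x.length).map (fun i => x.getD i 0) = x :=
    List.ext_getElem (by simp) fun i _ h => by simp [List.getElem?_eq_getElem h]
  conv_rhs => rw [← hx]
  exact List.filter_sublist.map _

lemma length_le_length_deleteD_add_card (x : List ℕ) (D : Finset ℕ) :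
    x.length ≤ (deleteD x D).length + D.card := by
  have hsplit := (List.range x.length).length_eq_length_filter_add (fun i => decide (i + 1 ∉ D))
  simp only [decide_not, Bool.not_not, List.length_range] at hsplit
  have hdeleted : ((List.range x.length).filter (fun i => decide (i + 1 ∈ D))).length
      ≤ D.card := by
    rw [← List.toFinset_card_of_nodup (List.nodup_range.filter _), ← List.filter_toFinset,
      List.toFinset_range]
    exact card_le_card_of_injOn (· + 1) (fun i hi => (mem_filter.mp hi).2)
      fun i _ j _ h => Nat.succ_injective h
  rw [deleteD, List.length_map]
  simp only [decide_not]
  omega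

theorem moment_diff_ne_zero_general (q d n : ℕ)
    (x y : List ℕ) (hxlen : x.length = n) (hylen : y.length = n)
    (hx : ∀ a ∈ x, a < q) (hy : ∀ a ∈ y, a < q) (hne : x ≠ y)
    (D E : Finset ℕ)
    (hd' : D.card ≤ d)
    (hdel : deleteD x D = deleteD y E) :
    moment (W (q - 1) d) x ≠ moment (W (q - 1) d) y := by
  have hzy : (deleteD x D).Sublist y := hdel ▸ deleteD_sublist y E
  have hxz := length_le_length_deleteD_add_card x D
  exact moment_W_ne_of_common_sublist (hxlen.trans hylen.symm) (deleteD_sublist x D) hzy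
    (by omega) (fun a ha => Nat.le_sub_one_of_lt (hx a ha))
    (fun a ha => Nat.le_sub_one_of_lt (hy a ha)) hne

theorem moment_diff_ne_zero (q d n : ℕ) (hq : 2 ≤ q) (hd : 1 ≤ d)
    (x y : List ℕ) (hxlen : x.length = n) (hylen : y.length = n)
    (hx : ∀ a ∈ x, a < q) (hy : ∀ a ∈ y, a < q) (hne : x ≠ y)
    (D E : Finset ℕ) (hD : D ⊆ Finset.Icc 1 n) (hE : E ⊆ Finset.Icc 1 n)
    (hcard : D.card = E.card) (hd' : D.card ≤ d)
    (hdel : deleteD x D = deleteD y E) :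
    moment (W (q - 1) d) x ≠ moment (W (q - 1) d) y :=
  moment_diff_ne_zero_general q d n x y hxlen hylen hx hy hne D E hd' hdel
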